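/- For α, β > −1, the Jacobi polynomial ξ_{α+1,β−1,m}(x) = P_m^{(−α−1,β−1)}(x) has degree exactly m and does not vanish at x = ±1 if and only if β ≠ 0 and neither α nor α−β−m+1 belongs to {0, 1, ..., m−1}. -/

import Mathlib

open Polynomial

/-! With `γ = −α−1`, `δ = β−1`, the explicit sum gives `P_m^{(γ,δ)}(1) = C(γ+m, m)`,
`P_m^{(γ,δ)}(−1) = (−1)^m C(δ+m, m)` and, by Chu–Vandermonde, leading coefficient
`2^{−m} C(γ+δ+2m, m)`. The three upper arguments are `m−1−x` for `x = α`, `−β` and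
`α−β−m+1`, and upper negation `C(m−1−x, m) = (−1)^m C(x, m)` shows that such a
coefficient vanishes exactly when `x ∈ {0, …, m−1}`. For `β > −1` the condition on `−β`
says `β = 0`. -/

/-- Generalized binomial coefficient `C(r, k) = r(r−1)⋯(r−k+1)/k!`. -/
noncomputable def rchoose (r : ℝ) (k : ℕ) : ℝ :=
  (∏ i ∈ Finset.range k, (r - (i : ℝ))) / (k.factorial : ℝ)

/-- The Jacobi polynomial `P_n^{(α,β)}` with general real parameters. -/
noncomputable def jacobiP (α β : ℝ) (n : ℕ) : Polynomial ℝ :=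
  ∑ j ∈ Finset.range (n + 1),
    C (rchoose (α + n) (n - j) * rchoose (β + n) j) *
      (C (2⁻¹ : ℝ) * (X - 1)) ^ j * (C (2⁻¹ : ℝ) * (X + 1)) ^ (n - j)

open Finset

lemma rchoose_eq_ringChoose (r : ℝ) (k : ℕ) : rchoose r k = Ring.choose r k := by
  rw [Ring.choose_eq_smul, ← aeval_eq_smeval, aeval_def, eval₂_eq_eval_map, descPochhammer_map,
    descPochhammer_eval_eq_prod_range, rchoose, smul_eq_mul, inv_mul_eq_div]

lemma rchoose_zero_right (r : ℝ) : rchoose r 0 = 1 := by simp [rchoose]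

lemma rchoose_ne_zero_iff {r : ℝ} {k : ℕ} : rchoose r k ≠ 0 ↔ ∀ i < k, r ≠ i := by
  simp [rchoose, prod_eq_zero_iff, sub_eq_zero, Nat.factorial_ne_zero]

lemma rchoose_add (a b : ℝ) (k : ℕ) :
    rchoose (a + b) k = ∑ ij ∈ antidiagonal k, rchoose a ij.1 * rchoose b ij.2 := by
  simp only [rchoose_eq_ringChoose, Ring.add_choose_eq k (Commute.all a b)]

lemma rchoose_sub_one_sub (x : ℝ) (k : ℕ) : rchoose (k - 1 - x) k = (-1) ^ k * rchoose x k := by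
  rw [rchoose_eq_ringChoose, rchoose_eq_ringChoose, show (k : ℝ) - 1 - x = -(x - k + 1) by ring,
    Ring.choose_neg, show x - k + 1 + k - 1 = x by ring, Units.smul_def, zsmul_eq_mul,
    Int.cast_negOnePow_natCast]

lemma rchoose_sub_one_sub_ne_zero_iff {x : ℝ} {k : ℕ} :
    rchoose (k - 1 - x) k ≠ 0 ↔ ∀ j < k, x ≠ j := by
  rw [rchoose_sub_one_sub, mul_ne_zero_iff, and_iff_right (pow_ne_zero _ (by norm_num)),
    rchoose_ne_zero_iff]

lemma forall_lt_neg_ne_natCast_iff {β : ℝ} {m : ℕ} (hβ : -1 < β) (hm : m ≠ 0) :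
    (∀ j < m, -β ≠ j) ↔ β ≠ 0 := by
  refine ⟨fun h hβ0 => h 0 (Nat.pos_of_ne_zero hm) (by simp [hβ0]), fun hβ0 j _ hj => ?_⟩
  obtain rfl : j = 0 := Nat.cast_lt_one.mp (show (j : ℝ) < 1 by linarith)
  exact hβ0 (by simpa using hj)

lemma natDegree_eq_iff_coeff_ne_zero {R : Type*} [Semiring R] {p : R[X]} {n : ℕ}
    (hp : p.natDegree ≤ n) (hn : n ≠ 0) : p.natDegree = n ↔ p.coeff n ≠ 0 :=
  ⟨fun h => coeff_ne_zero_of_eq_degree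
      ((degree_eq_iff_natDegree_eq_of_pos (Nat.pos_of_ne_zero hn)).2 h),
    natDegree_eq_of_le_of_coeff_ne_zero hp⟩

lemma monic_X_sub_one_pow_mul_X_add_one_pow {R : Type*} [CommRing R] (j k : ℕ) :
    ((X - 1 : R[X]) ^ j * (X + 1) ^ k).Monic := by
  simpa only [map_one] using ((monic_X_sub_C (1 : R)).pow j).mul ((monic_X_add_C (1 : R)).pow k)

lemma natDegree_X_sub_one_pow_mul_X_add_one_pow {R : Type*} [CommRing R] [Nontrivial R]
    (j k : ℕ) : ((X - 1 : R[X]) ^ j * (X + 1) ^ k).natDegree = j + k := by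
  rw [← C_1, ((monic_X_sub_C (1 : R)).pow j).natDegree_mul ((monic_X_add_C (1 : R)).pow k),
    (monic_X_sub_C 1).natDegree_pow, (monic_X_add_C 1).natDegree_pow, natDegree_X_sub_C,
    natDegree_X_add_C, mul_one, mul_one]

lemma jacobiP_eq_sum (γ δ : ℝ) (n : ℕ) :
    jacobiP γ δ n = ∑ j ∈ range (n + 1),
      C (2⁻¹ ^ n * (rchoose (γ + n) (n - j) * rchoose (δ + n) j)) *
        ((X - 1) ^ j * (X + 1) ^ (n - j)) := by
  refine sum_congr rfl fun j hj => ?_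
  rw [← pow_mul_pow_sub (2⁻¹ : ℝ) (mem_range_succ_iff.mp hj)]
  simp only [C_mul, C_pow, mul_pow]
  ring

lemma jacobiP_natDegree_le (γ δ : ℝ) (n : ℕ) : (jacobiP γ δ n).natDegree ≤ n := by
  rw [jacobiP_eq_sum]
  refine natDegree_sum_le_of_forall_le _ _ fun j hj => (natDegree_C_mul_le _ _).trans ?_
  rw [natDegree_X_sub_one_pow_mul_X_add_one_pow]
  have := mem_range_succ_iff.mp hj
  omega

lemma jacobiP_coeff_self (γ δ : ℝ) (n : ℕ) :
    (jacobiP γ δ n).coeff n = 2⁻¹ ^ n * rchoose (γ + δ + 2 * n) n := by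
  have hmonic_coeff (j : ℕ) (hj : j ∈ range (n + 1)) :
      ((X - 1 : ℝ[X]) ^ j * (X + 1) ^ (n - j)).coeff n = 1 := by
    have := (monic_X_sub_one_pow_mul_X_add_one_pow (R := ℝ) j (n - j)).coeff_natDegree
    rwa [natDegree_X_sub_one_pow_mul_X_add_one_pow,
      Nat.add_sub_cancel' (mem_range_succ_iff.mp hj)] at this
  rw [jacobiP_eq_sum, finsetSum_coeff, show γ + δ + 2 * (n : ℝ) = (δ + n) + (γ + n) by ring,
    rchoose_add, Nat.sum_antidiagonal_eq_sum_range_succ fun i j => rchoose (δ + n) i *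
      rchoose (γ + n) j, mul_sum]
  refine sum_congr rfl fun j hj => ?_
  rw [coeff_C_mul, hmonic_coeff j hj, mul_one, mul_comm (rchoose (δ + n) j)]

lemma jacobiP_natDegree_eq_iff (γ δ : ℝ) {n : ℕ} (hn : n ≠ 0) :
    (jacobiP γ δ n).natDegree = n ↔ rchoose (γ + δ + 2 * n) n ≠ 0 := by
  rw [natDegree_eq_iff_coeff_ne_zero (jacobiP_natDegree_le γ δ n) hn, jacobiP_coeff_self,
    mul_ne_zero_iff, and_iff_right (by positivity)]

lemma jacobiP_eval_one (γ δ : ℝ) (n : ℕ) : (jacobiP γ δ n).eval 1 = rchoose (γ + n) n := by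
  rw [jacobiP, eval_finsetSum, sum_eq_single 0]
  · norm_num [rchoose_zero_right]
  · intro j _ hj
    simp [zero_pow hj]
  · simp

lemma jacobiP_eval_neg_one (γ δ : ℝ) (n : ℕ) :
    (jacobiP γ δ n).eval (-1) = (-1) ^ n * rchoose (δ + n) n := by
  rw [jacobiP, eval_finsetSum, sum_eq_single n]
  · simp [rchoose_zero_right]
    ring
  · intro j hj hjn
    simp [zero_pow (Nat.sub_ne_zero_of_lt (lt_of_le_of_ne (mem_range_succ_iff.mp hj) hjn))]
  · simp

theorem stmt19_general (α β : ℝ) (m : ℕ) (hm : 1 ≤ m) (hβ : -1 < β) :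
    ((jacobiP (-α - 1) (β - 1) m).natDegree = m ∧
      (jacobiP (-α - 1) (β - 1) m).eval 1 ≠ 0 ∧
      (jacobiP (-α - 1) (β - 1) m).eval (-1) ≠ 0) ↔
    (β ≠ 0 ∧ ∀ j : ℕ, j < m → α ≠ (j : ℝ) ∧ α - β - (m : ℝ) + 1 ≠ (j : ℝ)) := by
  have hm0 : m ≠ 0 := by omega
  rw [jacobiP_natDegree_eq_iff _ _ hm0, jacobiP_eval_one, jacobiP_eval_neg_one, mul_ne_zero_iff,
    and_iff_right (pow_ne_zero _ (by norm_num)),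
    show -α - 1 + (β - 1) + 2 * (m : ℝ) = m - 1 - (α - β - m + 1) by ring,
    show -α - 1 + (m : ℝ) = m - 1 - α by ring, show β - 1 + (m : ℝ) = m - 1 - -β by ring,
    rchoose_sub_one_sub_ne_zero_iff, rchoose_sub_one_sub_ne_zero_iff,
    rchoose_sub_one_sub_ne_zero_iff, forall_lt_neg_ne_natCast_iff hβ hm0]
  simp only [imp_and, forall_and]
  tauto

/-- For `α, β > −1`, the polynomial `ξ_{α+1,β−1,m} = P_m^{(−α−1,β−1)}` has degree
exactly `m` and does not vanish at `x = ±1` if and only if `β ≠ 0` and neither `α` nor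
`α − β − m + 1` belongs to `{0, 1, …, m−1}`. -/
theorem stmt19 (α β : ℝ) (m : ℕ) (hm : 1 ≤ m) (hα : -1 < α) (hβ : -1 < β) :
    ((jacobiP (-α - 1) (β - 1) m).natDegree = m ∧
      (jacobiP (-α - 1) (β - 1) m).eval 1 ≠ 0 ∧
      (jacobiP (-α - 1) (β - 1) m).eval (-1) ≠ 0) ↔
    (β ≠ 0 ∧ ∀ j : ℕ, j < m → α ≠ (j : ℝ) ∧ α - β - (m : ℝ) + 1 ≠ (j : ℝ)) :=
  stmt19_general α β m hm hβ
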